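/- arXiv:2106.11206 — 3 statements merged into one kernel-verified Lean document; each statement's English description precedes it below -/
import Mathlib

section
/- Let η ∈ Ω, l ∈ {1,…,n} and (r_1,…,r_l) ∈ ℕ^l. Then the ℂ-linear spans in ℂ^{Λ_{2,n}} satisfy span{v̄ : v ∈ T_{0,η} ∪ ⋃_{i=1}^{l} (T_{i,η} + r_i)} = span{v̄ : v ∈ ⋃_{i=0}^{l} T_{i,η}}. In particular, for every r ∈ ℕ, the vector (v_{l,η} + (r,r))‾ belongs to span{v̄ : v ∈ ⋃_{i=0}^{l} T_{i,η}}. -/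
/-!
A functional `φ` on `ℂ^{Λ_{2,n}}` is a polynomial of degree `≤ n` without constant term, `φ(v̄)`
being its value at `v`. In the coordinates `t = y`, `u = x - y`, the set `T_{i,η} + r_i` consists
of `n - i + 1` points of the line `u = δ_i`, where `δ_i` is the difference of the coordinates of
`v_{i,η}`, and `T_{0,η} ∪ {0}` of `n + 1` points of `u = 0`; the `δ_i` are pairwise distinct since
`v_{i,η}` lies on an axis and its coordinate grows along blocks of equal parity. If `φ` kills these
points, it vanishes on the line `u = δ_0`, so it is divisible by `u - δ_0`; the quotient has degree
`≤ n - 1` and vanishes at the points of the next line, and so on. Hence, whatever the shifts `r_i`,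
the `v̄` span the same space as `v̄` for all points `v_{i,η} + (p, p)`, `i ≤ l`, `p ∈ ℕ`.
-/

open Finset

/-- `Λ_{2,n}`: pairs `α ∈ ℕ²` with `1 ≤ α₁ + α₂ ≤ n`. -/
def Lam2 (n : ℕ) : Finset (ℕ × ℕ) :=
  ((range (n+1)) ×ˢ (range (n+1))).filter (fun α => 1 ≤ α.1 + α.2 ∧ α.1 + α.2 ≤ n)

/-- `v̄ ∈ ℂ^{Λ_{2,n}}`, with `α`-coordinate `C(v₁,α₁)·C(v₂,α₂)`. -/
noncomputable def vbar (n : ℕ) (v : ℕ × ℕ) : (Lam2 n) → ℂ :=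
  fun α => ((v.1.choose α.1.1 * v.2.choose α.1.2 : ℕ) : ℂ)

/-- `Λ_{3,n}`: triples `β ∈ ℕ³` with `1 ≤ β₁ + β₂ + β₃ ≤ n`. -/
def Lam3 (n : ℕ) : Finset (ℕ × ℕ × ℕ) :=
  ((range (n+1)) ×ˢ (range (n+1)) ×ˢ (range (n+1))).filter
    (fun β => 1 ≤ β.1 + β.2.1 + β.2.2 ∧ β.1 + β.2.1 + β.2.2 ≤ n)

/-- The linear map `A_n : ℕ³ → ℕ²` with matrix rows `(1,1,n)` and `(0,1,n+1)`. -/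
def Amap (n : ℕ) (β : ℕ × ℕ × ℕ) : ℕ × ℕ :=
  (β.1 + β.2.1 + n * β.2.2, β.2.1 + (n+1) * β.2.2)

/-- `c_β = Σ_{γ ≤ β} (−1)^{|β−γ|} C(β,γ) (A_nγ)‾`. -/
noncomputable def cvec (n : ℕ) (β : ℕ × ℕ × ℕ) : (Lam2 n) → ℂ :=
  ∑ γ ∈ (range (β.1+1)) ×ˢ (range (β.2.1+1)) ×ˢ (range (β.2.2+1)),
    (((-1 : ℂ) ^ ((β.1 + β.2.1 + β.2.2) - (γ.1 + γ.2.1 + γ.2.2))) *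
      ((β.1.choose γ.1 * β.2.1.choose γ.2.1 * β.2.2.choose γ.2.2 : ℕ) : ℂ)) •
      vbar n (Amap n γ)

/-- `J ∈ S_{A_n}`: `J ⊆ Λ_{3,n}`, `|J| = λ_{2,n}`, `det L^c_J ≠ 0`. -/
def memSA (n : ℕ) (J : Finset (ℕ × ℕ × ℕ)) : Prop :=
  J ⊆ Lam3 n ∧ J.card = (Lam2 n).card ∧
    ∀ e : (Lam2 n) ≃ J,
      (Matrix.of fun i j : (Lam2 n) => cvec n (e i).1 j).det ≠ 0

/-- `m_J = Σ_{β ∈ J} A_nβ`. -/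
def mJ (n : ℕ) (J : Finset (ℕ × ℕ × ℕ)) : ℕ × ℕ := ∑ β ∈ J, Amap n β

/-- `f_k(v) = k·v₁ + (1−k)·v₂`. -/
def fk (k : ℕ) (v : ℕ × ℕ) : ℤ := (k : ℤ) * v.1 + (1 - (k : ℤ)) * v.2

/-- Data of a sequence `η = (z, d₀, d₁, …, d_r)`. -/
structure OmegaData where
  r : ℕ
  z : Bool
  d : ℕ → ℕ

/-- `η ∈ Ω`: `d₀ = 0`, `d_i ≥ 1` for `1 ≤ i ≤ r` (and `d_i = 0` beyond `r`),
and `d₀ + ⋯ + d_r = n`. -/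
def OmegaData.IsOmega (n : ℕ) (η : OmegaData) : Prop :=
  η.d 0 = 0 ∧ (∀ i, 1 ≤ i → i ≤ η.r → 1 ≤ η.d i) ∧
  (∀ i, η.r < i → η.d i = 0) ∧
  (∑ i ∈ range (η.r + 1), η.d i) = n

/-- The unique `t` with `Σ_{i=0}^{t−1} d_i < j ≤ Σ_{i=0}^{t} d_i`. -/
noncomputable def tIdx (η : OmegaData) (j : ℕ) : ℕ :=
  sInf {t | j ≤ ∑ i ∈ range (t+1), η.d i}

/-- The vector `v_{j,η} ∈ ℕ²`. -/
noncomputable def vvec (η : OmegaData) (j : ℕ) : ℕ × ℕ :=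
  let t := tIdx η j
  let c := j - ∑ i ∈ range t, η.d i
  let a := (∑ i ∈ range t, if (Odd i ↔ Odd t) then η.d i else 0) + c
  if (η.z = true) ↔ Odd t then (a, 0) else (0, a)

/-- `T_{j,η}` for `1 ≤ j ≤ n`, and `T_{0,η} = {(1,1),…,(n,n)}`. -/
noncomputable def Tj (n : ℕ) (η : OmegaData) (j : ℕ) : Finset (ℕ × ℕ) :=
  if j = 0 then (range n).image (fun q => (q+1, q+1))
  else (range (n - j + 1)).image (fun p => vvec η j + (p, p))

/-- `T_η = ⋃_{j=0}^{n} T_{j,η}`. -/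
noncomputable def Tset (n : ℕ) (η : OmegaData) : Finset (ℕ × ℕ) :=
  (range (n+1)).biUnion (fun j => Tj n η j)

/-- `r_{i,η} = n·π₂(v_{i,η})`. -/
noncomputable def rshift (n : ℕ) (η : OmegaData) (i : ℕ) : ℕ := n * (vvec η i).2

/-- `T'_η = T_{0,η} ∪ ⋃_{i=1}^{n} (T_{i,η} + r_{i,η})`. -/
noncomputable def Tset' (n : ℕ) (η : OmegaData) : Finset (ℕ × ℕ) :=
  Tj n η 0 ∪ (Finset.Icc 1 n).biUnion
    (fun i => (Tj n η i).image (fun v => v + (rshift n η i, rshift n η i)))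

/-- `J_η`: the (unique) subset of `Λ_{3,n}` with `A_n(J_η) = T'_η`. -/
noncomputable def Jset (n : ℕ) (η : OmegaData) : Finset (ℕ × ℕ × ℕ) :=
  (Lam3 n).filter (fun β => Amap n β ∈ Tset' n η)

/-- `z_k = 1` iff `f_k((1,0)) ≤ f_k((n,n+1))`. -/
def zk (n k : ℕ) : Bool := decide (fk k (1, 0) ≤ fk k (n, n+1))

/-- `t_l` in the recursive definition of `η_k`, where `O`, `E` are the odd- and
even-indexed partial sums `Σ_{j<l, j odd} d_{k,j}` and `Σ_{j<l, j even} d_{k,j}`. -/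
noncomputable def tval (n k : ℕ) (l O E : ℕ) : ℕ :=
  let w := (if Odd l then E else O) + 1
  if ((zk n k = true) ↔ Odd l) then
    sSup {m : ℕ | (m : ℤ) * fk k (1, 0) ≤ fk k (w * n, w * (n+1))}
  else
    sSup {m : ℕ | (m : ℤ) * fk k (n, n+1) ≤ fk k (w, 0)}

/-- The pair `(Σ_{j≤l, j odd} d_{k,j}, Σ_{j≤l, j even} d_{k,j})` of the recursion
defining `η_k`. -/
noncomputable def oeSums (n k : ℕ) : ℕ → ℕ × ℕ
  | 0 => (0, 0)
  | l + 1 =>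
    let p := oeSums n k l
    let O := p.1
    let E := p.2
    let S := O + E
    let dnext := if S < n then
        min (n - S) (tval n k (l+1) O E - (if Odd (l+1) then O else E))
      else 0
    if Odd (l+1) then (O + dnext, E) else (O, E + dnext)

/-- `d_{k,l}`. -/
noncomputable def dk (n k : ℕ) : ℕ → ℕ
  | 0 => 0
  | l + 1 =>
    let p := oeSums n k l
    let O := p.1
    let E := p.2
    let S := O + E
    if S < n then
      min (n - S) (tval n k (l+1) O E - (if Odd (l+1) then O else E))
    else 0

/-- `η_k = (z_k, d_{k,0}, …, d_{k,r})`, where `r` is the first index with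
`Σ_{j=0}^{r} d_{k,j} = n`. -/
noncomputable def etak (n k : ℕ) : OmegaData :=
  { r := sInf {r | ∑ j ∈ range (r+1), dk n k j = n},
    z := zk n k,
    d := dk n k }

section LinesVanishing

open Polynomial.Bivariate

variable {K : Type*} [Field K]

lemma natDegree_aeval_le_totalDegree {σ R : Type*} [CommSemiring R] (g : σ → Polynomial R)
    (hg : ∀ i, (g i).natDegree ≤ 1) (P : MvPolynomial σ R) :
    (MvPolynomial.aeval g P).natDegree ≤ P.totalDegree := by
  conv_lhs => rw [P.as_sum, map_sum]
  refine Polynomial.natDegree_sum_le_of_forall_le _ _ fun s hs => ?_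
  rw [MvPolynomial.aeval_monomial, Polynomial.algebraMap_eq]
  calc _ ≤ (s.prod fun i k => g i ^ k).natDegree := Polynomial.natDegree_C_mul_le _ _
    _ ≤ s.sum fun i k => k * (g i).natDegree := (Polynomial.natDegree_prod_le _ _).trans
        (Finset.sum_le_sum fun i _ => Polynomial.natDegree_pow_le)
    _ ≤ s.sum fun _ k => k :=
        Finset.sum_le_sum fun i _ => (Nat.mul_le_mul_left _ (hg i)).trans (mul_one _).le
    _ ≤ P.totalDegree := MvPolynomial.le_totalDegree hs

lemma totalDegree_aeval_le {σ R : Type*} [CommSemiring R] (f : Polynomial R)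
    (q : MvPolynomial σ R) :
    (Polynomial.aeval q f).totalDegree ≤ f.natDegree * q.totalDegree := by
  rw [Polynomial.aeval_eq_sum_range]
  refine MvPolynomial.totalDegree_finsetSum_le fun i hi => ?_
  calc _ ≤ (q ^ i).totalDegree := MvPolynomial.totalDegree_smul_le _ _
    _ ≤ i * q.totalDegree := MvPolynomial.totalDegree_pow _ _
    _ ≤ f.natDegree * q.totalDegree :=
        Nat.mul_le_mul_right _ (Nat.lt_succ_iff.mp (Finset.mem_range.mp hi))

lemma MvPolynomial.eval_polynomial_aeval {σ R : Type*} [CommSemiring R] (x : σ → R)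
    (q : MvPolynomial σ R) (f : Polynomial R) :
    MvPolynomial.eval x (Polynomial.aeval q f) = f.eval (MvPolynomial.eval x q) := by
  change MvPolynomial.aeval x (Polynomial.aeval q f) = _
  rw [← Polynomial.aeval_algHom_apply, Polynomial.coe_aeval_eq_eval]
  rfl

noncomputable abbrev lineRestrict (δ : K) : MvPolynomial (Fin 2) K →ₐ[K] Polynomial K :=
  MvPolynomial.aeval ![Polynomial.X, Polynomial.C δ]

lemma eval_lineRestrict (P : MvPolynomial (Fin 2) K) (δ t : K) :
    (lineRestrict δ P).eval t = MvPolynomial.eval ![t, δ] P := by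
  rw [MvPolynomial.aeval_def, ← Polynomial.coe_evalRingHom, MvPolynomial.eval₂_comp_left]
  congr 1
  · ext; simp
  · funext i; fin_cases i <;> simp

lemma natDegree_lineRestrict_le (P : MvPolynomial (Fin 2) K) (δ : K) :
    (lineRestrict δ P).natDegree ≤ P.totalDegree :=
  natDegree_aeval_le_totalDegree _ (fun i => by fin_cases i <;> simp) P

lemma lineRestrict_equivMvPolynomial (R : Polynomial (Polynomial K)) (δ : K) :
    lineRestrict δ (equivMvPolynomial K R) = R.eval (Polynomial.C δ) := by
  have : (lineRestrict δ).comp (equivMvPolynomial K).toAlgHom =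
      (Polynomial.aeval (Polynomial.C δ)).restrictScalars K := by
    ext <;> simp
  exact congr($this R)

lemma X_sub_C_dvd_of_lineRestrict_eq_zero {P : MvPolynomial (Fin 2) K} {δ : K}
    (h : lineRestrict δ P = 0) : MvPolynomial.X 1 - MvPolynomial.C δ ∣ P := by
  obtain ⟨R, rfl⟩ := (equivMvPolynomial K).surjective P
  have hR : Polynomial.X - Polynomial.C (Polynomial.C δ) ∣ R := by
    rw [Polynomial.dvd_iff_isRoot, Polynomial.IsRoot, ← lineRestrict_equivMvPolynomial, h]
  simpa using map_dvd (equivMvPolynomial K) hR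

lemma totalDegree_X_sub_C {σ : Type*} (i : σ) (δ : K) :
    (MvPolynomial.X i - MvPolynomial.C δ : MvPolynomial σ K).totalDegree = 1 := by
  rw [sub_eq_add_neg, ← map_neg, MvPolynomial.totalDegree_add_eq_left_of_totalDegree_lt] <;>
    simp

lemma lineRestrict_eq_zero_of_card {P : MvPolynomial (Fin 2) K} {δ : K} {s : Finset K}
    (hs : P.totalDegree < #s) (hP : ∀ t ∈ s, MvPolynomial.eval ![t, δ] P = 0) :
    lineRestrict δ P = 0 :=
  Polynomial.eq_zero_of_natDegree_lt_card_of_eval_eq_zero' _ s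
    (fun t ht => (eval_lineRestrict P δ t).trans (hP t ht))
    ((natDegree_lineRestrict_le P δ).trans_lt hs)

theorem eval_eq_zero_on_lines (δ : ℕ → K) (S : ℕ → Finset K) (l : ℕ)
    (P : MvPolynomial (Fin 2) K) (hδ : Set.InjOn δ (Set.Iic l))
    (hS : ∀ j ≤ l, P.totalDegree + 1 ≤ #(S j) + j)
    (hP : ∀ j ≤ l, ∀ t ∈ S j, MvPolynomial.eval ![t, δ j] P = 0) :
    ∀ j ≤ l, ∀ t, MvPolynomial.eval ![t, δ j] P = 0 := by
  induction l generalizing δ S P with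
  | zero =>
    intro j hj t
    obtain rfl : j = 0 := by omega
    rw [← eval_lineRestrict, lineRestrict_eq_zero_of_card (by simpa using hS 0 le_rfl)
      (hP 0 le_rfl), Polynomial.eval_zero]
  | succ l ih =>
    have h0 : lineRestrict (δ 0) P = 0 :=
      lineRestrict_eq_zero_of_card (by simpa using hS 0 (Nat.zero_le _)) (hP 0 (Nat.zero_le _))
    obtain ⟨Q, rfl⟩ := X_sub_C_dvd_of_lineRestrict_eq_zero h0
    rcases eq_or_ne Q 0 with rfl | hQ
    · simp
    have hX : (MvPolynomial.X 1 - MvPolynomial.C (δ 0) : MvPolynomial (Fin 2) K) ≠ 0 :=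
      fun h => by simpa [h] using totalDegree_X_sub_C (1 : Fin 2) (δ 0)
    have hdeg : ((MvPolynomial.X 1 - MvPolynomial.C (δ 0)) * Q).totalDegree =
        Q.totalDegree + 1 := by
      rw [MvPolynomial.totalDegree_mul_of_isDomain hX hQ, totalDegree_X_sub_C, add_comm]
    have hQ_lines : ∀ j ≤ l, ∀ t, MvPolynomial.eval ![t, δ (j + 1)] Q = 0 := by
      refine ih (δ ∘ Nat.succ) (S ∘ Nat.succ) Q ?_ ?_ ?_
      · exact hδ.comp Nat.succ_injective.injOn fun j hj => Nat.succ_le_succ hj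
      · intro j hj
        have := hS (j + 1) (by omega)
        simp only [Function.comp_apply, Nat.succ_eq_add_one]
        omega
      · intro j hj t ht
        have hne : δ (j + 1) - δ 0 ≠ 0 :=
          sub_ne_zero.mpr fun h => by simpa using hδ (by simp; omega) (by simp) h
        simpa [hne] using hP (j + 1) (by omega) t ht
    rintro (_ | j) hj t
    · rw [← eval_lineRestrict, h0, Polynomial.eval_zero]
    · simp [hQ_lines j (by omega) t]

end LinesVanishing

noncomputable def choosePoly (K : Type*) [Field K] (k : ℕ) : Polynomial K :=
  Polynomial.C ((k.factorial : K)⁻¹) * descPochhammer K k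

section ChoosePoly

variable {K : Type*} [Field K]

lemma natDegree_choosePoly_le (k : ℕ) : (choosePoly K k).natDegree ≤ k :=
  (Polynomial.natDegree_C_mul_le _ _).trans (descPochhammer_natDegree K k).le

lemma eval_choosePoly [CharZero K] (m k : ℕ) : (choosePoly K k).eval (m : K) = m.choose k := by
  have hk : (k.factorial : K) ≠ 0 := Nat.cast_ne_zero.mpr k.factorial_ne_zero
  rw [choosePoly, Polynomial.eval_mul, Polynomial.eval_C, descPochhammer_eval_eq_descFactorial,
    Nat.descFactorial_eq_factorial_mul_choose, Nat.cast_mul, inv_mul_cancel_left₀ hk]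

end ChoosePoly

lemma vbar_zero (n : ℕ) : vbar n 0 = 0 := by
  funext α
  have hα := (mem_filter.mp α.2).2.1
  rcases Nat.eq_zero_or_pos α.1.1 with h | h
  · simp [vbar, Nat.choose_eq_zero_of_lt (show 0 < α.1.2 by omega)]
  · simp [vbar, Nat.choose_eq_zero_of_lt h]

/-- `Σ_α φ(e_α) C(x, α₁) C(y, α₂)` in the coordinates `t = y` (variable `0`) and `u = x - y`
(variable `1`). -/
noncomputable def vbarDualPoly (n : ℕ) (φ : Module.Dual ℂ ((Lam2 n) → ℂ)) :
    MvPolynomial (Fin 2) ℂ :=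
  ∑ α : Lam2 n, MvPolynomial.C (φ fun β => if α = β then 1 else 0) *
    Polynomial.aeval (MvPolynomial.X 0 + MvPolynomial.X 1) (choosePoly ℂ α.1.1) *
    Polynomial.aeval (MvPolynomial.X 0) (choosePoly ℂ α.1.2)

lemma totalDegree_vbarDualPoly_le (n : ℕ) (φ : Module.Dual ℂ ((Lam2 n) → ℂ)) :
    (vbarDualPoly n φ).totalDegree ≤ n := by
  refine MvPolynomial.totalDegree_finsetSum_le fun α _ => ?_
  have hα := (mem_filter.mp α.2).2.2
  have hX : (MvPolynomial.X 0 + MvPolynomial.X 1 : MvPolynomial (Fin 2) ℂ).totalDegree ≤ 1 :=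
    (MvPolynomial.totalDegree_add _ _).trans (by simp)
  calc _ ≤ 0 + α.1.1 * 1 + α.1.2 * 1 := by
        refine (MvPolynomial.totalDegree_mul _ _).trans (add_le_add
          ((MvPolynomial.totalDegree_mul _ _).trans (add_le_add (by simp) ?_)) ?_)
        · exact (totalDegree_aeval_le _ _).trans
            (Nat.mul_le_mul (natDegree_choosePoly_le _) hX)
        · exact (totalDegree_aeval_le _ _).trans
            (Nat.mul_le_mul (natDegree_choosePoly_le _) (by simp))
    _ ≤ n := by omega

lemma dual_apply_vbar (n : ℕ) (φ : Module.Dual ℂ ((Lam2 n) → ℂ)) (w : ℕ × ℕ) :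
    φ (vbar n w) = MvPolynomial.eval ![(w.2 : ℂ), (w.1 : ℂ) - w.2] (vbarDualPoly n φ) := by
  rw [LinearMap.pi_apply_eq_sum_univ, vbarDualPoly, map_sum]
  refine Finset.sum_congr rfl fun α _ => ?_
  simp only [vbar, Nat.cast_mul, smul_eq_mul, Fin.isValue, map_mul, MvPolynomial.eval_C,
    MvPolynomial.eval_polynomial_aeval, map_add, MvPolynomial.eval_X, Matrix.cons_val_zero,
    Matrix.cons_val_one, Matrix.cons_val_fin_one, add_sub_cancel, eval_choosePoly]
  ring

section Geometry

variable {n : ℕ} {η : OmegaData}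

lemma tIdx_zero (η : OmegaData) : tIdx η 0 = 0 :=
  Nat.sInf_eq_zero.mpr (Or.inl (Nat.zero_le _))

lemma le_sum_range_tIdx_succ (hη : η.IsOmega n) {j : ℕ} (hjn : j ≤ n) :
    j ≤ ∑ i ∈ range (tIdx η j + 1), η.d i :=
  Nat.sInf_mem (s := {t | j ≤ ∑ i ∈ range (t + 1), η.d i})
    ⟨η.r, by simpa [hη.2.2.2] using hjn⟩

lemma sum_range_tIdx_lt (hη : η.IsOmega n) {j : ℕ} (hj : 1 ≤ j) (hjn : j ≤ n) :
    ∑ i ∈ range (tIdx η j), η.d i < j := by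
  have hpos : tIdx η j ≠ 0 := fun h0 => by
    simpa [h0, hη.1] using (le_sum_range_tIdx_succ hη hjn).trans_lt' hj
  have h : ¬ j ≤ ∑ i ∈ range (tIdx η j - 1 + 1), η.d i :=
    Nat.notMem_of_lt_sInf (s := {t | j ≤ ∑ i ∈ range (t + 1), η.d i}) (Nat.sub_one_lt hpos)
  rwa [Nat.sub_add_cancel (Nat.one_le_iff_ne_zero.mpr hpos), not_le] at h

lemma tIdx_mono (hη : η.IsOmega n) {i j : ℕ} (hij : i ≤ j) (hjn : j ≤ n) :
    tIdx η i ≤ tIdx η j :=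
  Nat.sInf_le (hij.trans (le_sum_range_tIdx_succ hη hjn))

noncomputable def vvecCoord (η : OmegaData) (j : ℕ) : ℕ :=
  (∑ i ∈ range (tIdx η j), if (Odd i ↔ Odd (tIdx η j)) then η.d i else 0) +
    (j - ∑ i ∈ range (tIdx η j), η.d i)

lemma vvec_eq_ite (η : OmegaData) (j : ℕ) :
    vvec η j = if (η.z = true ↔ Odd (tIdx η j)) then (vvecCoord η j, 0)
      else (0, vvecCoord η j) := rfl

lemma vvecCoord_zero (η : OmegaData) : vvecCoord η 0 = 0 := by
  simp [vvecCoord, tIdx_zero]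

lemma vvec_zero (η : OmegaData) : vvec η 0 = 0 := by
  simp [vvec_eq_ite, vvecCoord_zero]

lemma vvecCoord_pos (hη : η.IsOmega n) {j : ℕ} (hj : 1 ≤ j) (hjn : j ≤ n) :
    0 < vvecCoord η j := by
  have := sum_range_tIdx_lt hη hj hjn
  unfold vvecCoord
  omega

lemma vvecCoord_lt (hη : η.IsOmega n) {i j : ℕ} (hij : i < j) (hjn : j ≤ n)
    (hpar : Odd (tIdx η i) ↔ Odd (tIdx η j)) : vvecCoord η i < vvecCoord η j := by
  rcases Nat.eq_zero_or_pos i with rfl | hi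
  · rw [vvecCoord_zero]; exact vvecCoord_pos hη (by omega) hjn
  have hsi := sum_range_tIdx_lt hη hi (by omega)
  have hsj := sum_range_tIdx_lt hη (by omega) hjn
  have hmi := le_sum_range_tIdx_succ hη (by omega : i ≤ n)
  rw [Finset.sum_range_succ] at hmi
  set O : ℕ → ℕ := fun t => ∑ k ∈ range t, if (Odd k ↔ Odd (tIdx η j)) then η.d k else 0 with hO
  have hci : vvecCoord η i = O (tIdx η i) + (i - ∑ k ∈ range (tIdx η i), η.d k) := by
    simp only [vvecCoord, hO]
    congr 1
    exact Finset.sum_congr rfl fun k _ => if_congr (iff_congr Iff.rfl hpar) rfl rfl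
  have hcj : vvecCoord η j = O (tIdx η j) + (j - ∑ k ∈ range (tIdx η j), η.d k) := rfl
  rcases (tIdx_mono hη hij.le hjn).eq_or_lt with heq | hlt
  · rw [hci, hcj, ← heq]
    omega
  · have hstep : O (tIdx η i + 1) = O (tIdx η i) + η.d (tIdx η i) := by
      simp only [hO, Finset.sum_range_succ, if_pos hpar]
    have hmono : O (tIdx η i + 1) ≤ O (tIdx η j) :=
      Finset.sum_le_sum_of_subset (range_subset_range.mpr hlt)
    omega

lemma injOn_vvec_fst_sub_snd (hη : η.IsOmega n) :
    Set.InjOn (fun j => ((vvec η j).1 : ℤ) - (vvec η j).2) (Set.Iic n) := by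
  intro i hi j hj h
  by_contra hne
  wlog hij : i < j generalizing i j
  · exact this hj hi h.symm (Ne.symm hne) (by omega)
  have hpos := vvecCoord_pos hη (by omega) hj
  simp only [vvec_eq_ite] at h
  by_cases hpar : Odd (tIdx η i) ↔ Odd (tIdx η j)
  · have hlt := vvecCoord_lt hη hij hj hpar
    split_ifs at h <;> simp at h <;> omega
  · split_ifs at h <;> simp at h <;> first | omega | tauto

end Geometry

noncomputable def shiftedT (n : ℕ) (η : OmegaData) (l : ℕ) (ρ : ℕ → ℕ) : Finset (ℕ × ℕ) :=
  Tj n η 0 ∪ (Icc 1 l).biUnion fun i => (Tj n η i).image fun v => v + (ρ i, ρ i)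

section ShiftedT

variable {n l : ℕ} {η : OmegaData} {ρ : ℕ → ℕ}

lemma shiftedT_zero : shiftedT n η l 0 = (range (l + 1)).biUnion (Tj n η) := by
  ext w
  simp only [shiftedT, Pi.zero_apply, Prod.mk_zero_zero, add_zero, image_id', mem_union,
    mem_biUnion, mem_Icc, mem_range]
  constructor
  · rintro (hw | ⟨i, hi, hw⟩)
    exacts [⟨0, by omega, hw⟩, ⟨i, by omega, hw⟩]
  · rintro ⟨i, hi, hw⟩
    rcases Nat.eq_zero_or_pos i with rfl | hi0
    exacts [Or.inl hw, Or.inr ⟨i, ⟨hi0, by omega⟩, hw⟩]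

lemma Tj_zero : Tj n η 0 = (range n).image fun q => (q + 1, q + 1) := if_pos rfl

lemma Tj_of_ne_zero {j : ℕ} (hj : j ≠ 0) :
    Tj n η j = (range (n - j + 1)).image fun p => vvec η j + (p, p) := if_neg hj

lemma exists_eq_vvec_add_of_mem_shiftedT {w : ℕ × ℕ} (hw : w ∈ shiftedT n η l ρ) :
    ∃ j ≤ l, ∃ p, w = vvec η j + (p, p) := by
  rcases mem_union.mp hw with h | h
  · obtain ⟨q, _, rfl⟩ := mem_image.mp (Tj_zero ▸ h)
    exact ⟨0, Nat.zero_le l, q + 1, by simp [vvec_zero]⟩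
  · obtain ⟨i, hi, hv⟩ := mem_biUnion.mp h
    obtain ⟨hi1, hil⟩ := mem_Icc.mp hi
    obtain ⟨v, hv', rfl⟩ := mem_image.mp hv
    rw [Tj_of_ne_zero (by omega : i ≠ 0)] at hv'
    obtain ⟨p, _, rfl⟩ := mem_image.mp hv'
    exact ⟨i, hil, p + ρ i, by ext <;> simp [add_assoc]⟩

lemma diag_mem_shiftedT {p : ℕ} (hp : 1 ≤ p) (hpn : p ≤ n) : (p, p) ∈ shiftedT n η l ρ :=
  mem_union_left _ <| Tj_zero ▸
    mem_image.mpr ⟨p - 1, by simp; omega, by simp [Nat.sub_add_cancel hp]⟩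

lemma vvec_add_mem_shiftedT {j p : ℕ} (hj : 1 ≤ j) (hjl : j ≤ l) (hp : p ≤ n - j) :
    vvec η j + (ρ j + p, ρ j + p) ∈ shiftedT n η l ρ := by
  refine mem_union_right _ (mem_biUnion.mpr ⟨j, mem_Icc.mpr ⟨hj, hjl⟩, ?_⟩)
  refine mem_image.mpr ⟨vvec η j + (p, p), ?_, by ext <;> simp <;> ring⟩
  rw [Tj_of_ne_zero (by omega : j ≠ 0)]
  exact mem_image.mpr ⟨p, by simp; omega, rfl⟩

end ShiftedT

lemma vbar_vvec_add_mem_span {n l : ℕ} {η : OmegaData} (hη : η.IsOmega n) (hln : l ≤ n)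
    (ρ : ℕ → ℕ) {j : ℕ} (hj : j ≤ l) (p : ℕ) :
    vbar n (vvec η j + (p, p)) ∈ Submodule.span ℂ (vbar n '' ↑(shiftedT n η l ρ)) := by
  rw [← Subspace.forall_mem_dualAnnihilator_apply_eq_zero_iff]
  intro φ hφ
  have hvan : ∀ w ∈ shiftedT n η l ρ, φ (vbar n w) = 0 := fun w hw =>
    (Submodule.mem_dualAnnihilator φ).mp hφ _ (Submodule.subset_span ⟨w, hw, rfl⟩)
  set δ : ℕ → ℂ := fun j => ((vvec η j).1 : ℂ) - (vvec η j).2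
  have hline : ∀ j q, φ (vbar n (vvec η j + (q, q))) =
      MvPolynomial.eval ![(((vvec η j).2 + q : ℕ) : ℂ), δ j] (vbarDualPoly n φ) := by
    intro j q
    simp only [dual_apply_vbar, Prod.fst_add, Prod.snd_add, Nat.cast_add, δ,
      add_sub_add_right_eq_sub]
  have hδ : Set.InjOn δ (Set.Iic l) := fun i hi j hj h =>
    injOn_vvec_fst_sub_snd hη (Set.mem_Iic.mpr (le_trans hi hln))
      (Set.mem_Iic.mpr (le_trans hj hln)) (Int.cast_injective (α := ℂ) (by push_cast; exact h))
  let shift : ℕ → ℕ := fun j => if j = 0 then 0 else ρ j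
  let S : ℕ → Finset ℂ := fun j =>
    (range (n - j + 1)).image fun q => (((vvec η j).2 + (shift j + q) : ℕ) : ℂ)
  have hS : ∀ j ≤ l, (vbarDualPoly n φ).totalDegree + 1 ≤ #(S j) + j := by
    intro j hj
    rw [card_image_of_injective _ fun a b h => by simpa using h, card_range]
    have := totalDegree_vbarDualPoly_le n φ
    omega
  have hP : ∀ j ≤ l, ∀ t ∈ S j, MvPolynomial.eval ![t, δ j] (vbarDualPoly n φ) = 0 := by
    intro j hj t ht
    obtain ⟨q, hq, rfl⟩ := mem_image.mp ht
    rw [← hline]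
    have hq' : q ≤ n - j := Nat.lt_succ_iff.mp (mem_range.mp hq)
    rcases Nat.eq_zero_or_pos j with rfl | hj1
    · simp only [shift, if_pos rfl, zero_add, vvec_zero]
      rcases Nat.eq_zero_or_pos q with rfl | hq1
      · rw [← Prod.zero_eq_mk, vbar_zero, map_zero]
      · exact hvan _ (diag_mem_shiftedT hq1 (by omega))
    · simp only [shift, if_neg hj1.ne']
      exact hvan _ (vvec_add_mem_shiftedT hj1 hj hq')
  rw [hline, eval_eq_zero_on_lines δ S l _ hδ hS hP j hj]

lemma span_vbar_shiftedT {n l : ℕ} {η : OmegaData} (hη : η.IsOmega n) (hln : l ≤ n)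
    (ρ : ℕ → ℕ) :
    Submodule.span ℂ (vbar n '' ↑(shiftedT n η l ρ)) =
      Submodule.span ℂ (vbar n '' {w | ∃ j ≤ l, ∃ p, w = vvec η j + (p, p)}) := by
  refine le_antisymm (Submodule.span_mono (Set.image_mono fun w hw =>
    exists_eq_vvec_add_of_mem_shiftedT hw)) (Submodule.span_le.mpr ?_)
  rintro _ ⟨_, ⟨j, hj, p, rfl⟩, rfl⟩
  exact vbar_vvec_add_mem_span hη hln ρ hj p

theorem stmt2_general (n : ℕ) (η : OmegaData) (hη : η.IsOmega n)
    (l : ℕ) (hln : l ≤ n) (rr : ℕ → ℕ) :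
    Submodule.span ℂ (vbar n '' ↑(Tj n η 0 ∪ (Finset.Icc 1 l).biUnion
        (fun i => (Tj n η i).image (fun v => v + (rr i, rr i))))) =
      Submodule.span ℂ (vbar n '' ↑((range (l+1)).biUnion (fun i => Tj n η i))) ∧
    ∀ r : ℕ, vbar n (vvec η l + (r, r)) ∈
      Submodule.span ℂ (vbar n '' ↑((range (l+1)).biUnion (fun i => Tj n η i))) := by
  rw [← shiftedT_zero]
  exact ⟨(span_vbar_shiftedT hη hln rr).trans (span_vbar_shiftedT hη hln 0).symm,
    fun r => vbar_vvec_add_mem_span hη hln 0 le_rfl r⟩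

theorem stmt2 (n : ℕ) (hn : 1 ≤ n) (η : OmegaData) (hη : η.IsOmega n)
    (l : ℕ) (hl1 : 1 ≤ l) (hln : l ≤ n) (rr : ℕ → ℕ) :
    Submodule.span ℂ (vbar n '' ↑(Tj n η 0 ∪ (Finset.Icc 1 l).biUnion
        (fun i => (Tj n η i).image (fun v => v + (rr i, rr i))))) =
      Submodule.span ℂ (vbar n '' ↑((range (l+1)).biUnion (fun i => Tj n η i))) ∧
    ∀ r : ℕ, vbar n (vvec η l + (r, r)) ∈
      Submodule.span ℂ (vbar n '' ↑((range (l+1)).biUnion (fun i => Tj n η i))) :=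
  stmt2_general n η hη l hln rr
end

section
/- Let η ∈ Ω and j ∈ {1,…,n}. If v_{j,η} = (0,l) for some l, then {v_{i,η} : 1 ≤ i ≤ j} = {(0,t) : 1 ≤ t ≤ l} ∪ {(s,0) : 1 ≤ s ≤ j−l}. If v_{j,η} = (l,0) for some l, then {v_{i,η} : 1 ≤ i ≤ j} = {(0,t) : 1 ≤ t ≤ j−l} ∪ {(s,0) : 1 ≤ s ≤ l}. -/
open Finset

section Helpers

private lemma vvec_eq (η : OmegaData) (j : ℕ) : vvec η j =
    (if (η.z = true) ↔ Odd (tIdx η j) then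
      ((∑ i ∈ range (tIdx η j), if (Odd i ↔ Odd (tIdx η j)) then η.d i else 0) +
        (j - ∑ i ∈ range (tIdx η j), η.d i), 0)
    else
      (0, (∑ i ∈ range (tIdx η j), if (Odd i ↔ Odd (tIdx η j)) then η.d i else 0) +
        (j - ∑ i ∈ range (tIdx η j), η.d i))) := rfl

private lemma sum_d_le (η : OmegaData) {s t : ℕ} (h : s ≤ t) :
    ∑ i ∈ range s, η.d i ≤ ∑ i ∈ range t, η.d i :=
  Finset.sum_le_sum_of_subset (Finset.range_subset_range.2 h)

private lemma P_le_B (η : OmegaData) (t : ℕ) :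
    (∑ i ∈ range t, if (Odd i ↔ Odd t) then η.d i else 0) ≤ ∑ i ∈ range t, η.d i :=
  Finset.sum_le_sum (fun i _ => by split_ifs <;> simp)

private lemma tIdx_spec {n : ℕ} (η : OmegaData) (hη : η.IsOmega n)
    {j : ℕ} (hj1 : 1 ≤ j) (hjn : j ≤ n) :
    1 ≤ tIdx η j ∧ tIdx η j ≤ η.r ∧ j ≤ ∑ i ∈ range (tIdx η j + 1), η.d i ∧
      ∑ i ∈ range (tIdx η j), η.d i < j := by
  obtain ⟨hd0, hd1, hdr, hsum⟩ := hη
  have hmem : η.r ∈ {t | j ≤ ∑ i ∈ range (t+1), η.d i} := by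
    simp only [Set.mem_setOf_eq, hsum]; exact hjn
  have hne : {t | j ≤ ∑ i ∈ range (t+1), η.d i}.Nonempty := ⟨_, hmem⟩
  have hin : j ≤ ∑ i ∈ range (tIdx η j + 1), η.d i := Nat.sInf_mem hne
  have hle : tIdx η j ≤ η.r := Nat.sInf_le hmem
  have ht1 : 1 ≤ tIdx η j := by
    by_contra h
    have h0 : tIdx η j = 0 := by omega
    rw [h0, Finset.sum_range_one, hd0] at hin
    omega
  refine ⟨ht1, hle, hin, ?_⟩
  have hlt : tIdx η j - 1 < tIdx η j := by omega
  have hnm : tIdx η j - 1 ∉ {t | j ≤ ∑ i ∈ range (t+1), η.d i} :=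
    Nat.notMem_of_lt_sInf hlt
  simp only [Set.mem_setOf_eq, not_le] at hnm
  rwa [show tIdx η j - 1 + 1 = tIdx η j by omega] at hnm

private lemma tIdx_succ_same {n : ℕ} (η : OmegaData) (hη : η.IsOmega n)
    {j : ℕ} (hj1 : 1 ≤ j) (hjn : j ≤ n)
    (h : j + 1 ≤ ∑ i ∈ range (tIdx η j + 1), η.d i) :
    tIdx η (j+1) = tIdx η j := by
  obtain ⟨ht1, htr, hjS, hBj⟩ := tIdx_spec η hη hj1 hjn
  have hmem : tIdx η j ∈ {t | j + 1 ≤ ∑ i ∈ range (t+1), η.d i} := h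
  refine le_antisymm (Nat.sInf_le hmem) ?_
  have hmem2 : tIdx η (j+1) ∈ {t | j + 1 ≤ ∑ i ∈ range (t+1), η.d i} :=
    Nat.sInf_mem ⟨_, hmem⟩
  by_contra hlt
  push_neg at hlt
  have : ∑ i ∈ range (tIdx η (j+1) + 1), η.d i ≤ ∑ i ∈ range (tIdx η j), η.d i :=
    sum_d_le η (by omega)
  simp only [Set.mem_setOf_eq] at hmem2
  omega

private lemma tIdx_succ_flip {n : ℕ} (η : OmegaData) (hη : η.IsOmega n)
    {j : ℕ} (hj1 : 1 ≤ j) (hjn : j + 1 ≤ n)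
    (h : j = ∑ i ∈ range (tIdx η j + 1), η.d i) :
    tIdx η (j+1) = tIdx η j + 1 := by
  obtain ⟨ht1, htr, hjS, hBj⟩ := tIdx_spec η hη hj1 (by omega)
  obtain ⟨hd0, hd1, hdr, hsum⟩ := hη
  have htlt : tIdx η j < η.r := by
    rcases lt_or_eq_of_le htr with h' | h'
    · exact h'
    · exfalso; rw [h'] at h; omega
  have hd : 1 ≤ η.d (tIdx η j + 1) := hd1 _ (by omega) (by omega)
  have hmem : tIdx η j + 1 ∈ {t | j + 1 ≤ ∑ i ∈ range (t+1), η.d i} := by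
    simp only [Set.mem_setOf_eq, Finset.sum_range_succ (n := tIdx η j + 1)]
    omega
  refine le_antisymm (Nat.sInf_le hmem) ?_
  by_contra hlt
  push_neg at hlt
  have hmem2 : tIdx η (j+1) ∈ {t | j + 1 ≤ ∑ i ∈ range (t+1), η.d i} :=
    Nat.sInf_mem ⟨_, hmem⟩
  simp only [Set.mem_setOf_eq] at hmem2
  have : ∑ i ∈ range (tIdx η (j+1) + 1), η.d i ≤ ∑ i ∈ range (tIdx η j + 1), η.d i :=
    sum_d_le η (by omega)
  omega

private lemma vvec_one {n : ℕ} (η : OmegaData) (hη : η.IsOmega n) (hn : 1 ≤ n) :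
    vvec η 1 = (1, 0) ∨ vvec η 1 = (0, 1) := by
  obtain ⟨ht1, htr, hjS, hBj⟩ := tIdx_spec η hη le_rfl hn
  have hB : ∑ i ∈ range (tIdx η 1), η.d i = 0 := by omega
  have hP : (∑ i ∈ range (tIdx η 1), if (Odd i ↔ Odd (tIdx η 1)) then η.d i else 0) = 0 := by
    have := P_le_B η (tIdx η 1)
    omega
  rw [vvec_eq]
  split_ifs with hc
  · left; rw [hP, hB]
  · right; rw [hP, hB]

private lemma vvec_succ {n : ℕ} (η : OmegaData) (hη : η.IsOmega n)
    {j : ℕ} (hj1 : 1 ≤ j) (hjn : j + 1 ≤ n) :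
    (vvec η (j+1) = ((vvec η j).1 + 1, 0) ∧ (vvec η j).2 = 0) ∨
    (vvec η (j+1) = (0, (vvec η j).2 + 1) ∧ (vvec η j).1 = 0) ∨
    (vvec η (j+1) = (0, j - (vvec η j).1 + 1) ∧ (vvec η j).2 = 0 ∧ (vvec η j).1 ≤ j) ∨
    (vvec η (j+1) = (j - (vvec η j).2 + 1, 0) ∧ (vvec η j).1 = 0 ∧ (vvec η j).2 ≤ j) := by
  obtain ⟨ht1, htr, hjS, hBj⟩ := tIdx_spec η hη hj1 (by omega)
  obtain ⟨t, ht⟩ : ∃ t', tIdx η j = t' := ⟨_, rfl⟩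
  rw [ht] at ht1 htr hjS hBj
  have hvj : vvec η j = (if (η.z = true) ↔ Odd t then
      ((∑ i ∈ range t, if (Odd i ↔ Odd t) then η.d i else 0) +
        (j - ∑ i ∈ range t, η.d i), 0)
    else (0, (∑ i ∈ range t, if (Odd i ↔ Odd t) then η.d i else 0) +
        (j - ∑ i ∈ range t, η.d i))) := by rw [vvec_eq, ht]
  have hPB := P_le_B η t
  obtain ⟨B, hB⟩ : ∃ B, ∑ i ∈ range t, η.d i = B := ⟨_, rfl⟩
  obtain ⟨P, hP⟩ : ∃ P, (∑ i ∈ range t, if (Odd i ↔ Odd t) then η.d i else 0) = P := ⟨_, rfl⟩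
  obtain ⟨Q, hQ⟩ : ∃ Q, (∑ i ∈ range t, if (Odd i ↔ Odd t) then 0 else η.d i) = Q := ⟨_, rfl⟩
  rw [hB] at hBj hPB
  rw [hP, hB] at hvj
  rw [hP] at hPB
  have hPQ : P + Q = B := by
    rw [← hB, ← hP, ← hQ, ← Finset.sum_add_distrib]
    exact Finset.sum_congr rfl (fun i _ => by split_ifs <;> simp)
  have hSt : ∑ i ∈ range (t + 1), η.d i = B + η.d t := by
    rw [Finset.sum_range_succ, hB]
  rw [hSt] at hjS
  by_cases hsame : j + 1 ≤ B + η.d t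
  · have ht' : tIdx η (j+1) = t := by
      have := tIdx_succ_same η hη hj1 (by omega) (by rw [ht, hSt]; exact hsame)
      rw [ht] at this; exact this
    have hvj1 : vvec η (j+1) = (if (η.z = true) ↔ Odd t then (P + (j + 1 - B), 0)
        else (0, P + (j + 1 - B))) := by
      rw [vvec_eq, ht', hP, hB]
    have harr : P + (j + 1 - B) = (P + (j - B)) + 1 := by omega
    rw [harr] at hvj1
    by_cases hc : (η.z = true) ↔ Odd t
    · left
      rw [hvj1, hvj, if_pos hc, if_pos hc]
      exact ⟨rfl, rfl⟩
    · right; left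
      rw [hvj1, hvj, if_neg hc, if_neg hc]
      exact ⟨rfl, rfl⟩
  · have hflip : j = B + η.d t := by omega
    have ht' : tIdx η (j+1) = t + 1 := by
      have := tIdx_succ_flip η hη hj1 hjn (by rw [ht, hSt]; exact hflip)
      rw [ht] at this; exact this
    have hP' : (∑ i ∈ range (t + 1), if (Odd i ↔ Odd (t+1)) then η.d i else 0) = Q := by
      rw [Finset.sum_range_succ]
      have h0 : (if (Odd t ↔ Odd (t+1)) then η.d t else 0) = 0 := by
        rw [if_neg]; rw [Nat.odd_add_one]; tauto
      rw [h0, add_zero, ← hQ]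
      refine Finset.sum_congr rfl (fun i _ => ?_)
      have hi : (Odd i ↔ Odd (t+1)) ↔ ¬(Odd i ↔ Odd t) := by
        rw [Nat.odd_add_one]; tauto
      by_cases h : Odd i ↔ Odd t
      · rw [if_neg (by tauto), if_pos h]
      · rw [if_pos (by tauto), if_neg h]
    have hvj1 : vvec η (j+1) = (if (η.z = true) ↔ Odd (t+1) then (Q + 1, 0)
        else (0, Q + 1)) := by
      rw [vvec_eq, ht', hP', hSt, show j + 1 - (B + η.d t) = 1 from by omega]
    by_cases hc : (η.z = true) ↔ Odd t
    · right; right; left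
      have hc2 : ¬((η.z = true) ↔ Odd (t+1)) := by rw [Nat.odd_add_one]; tauto
      rw [hvj1, hvj, if_pos hc, if_neg hc2]
      refine ⟨?_, rfl, by simp; omega⟩
      simp only [Prod.mk.injEq, true_and, and_true]
      omega
    · right; right; right
      have hc2 : (η.z = true) ↔ Odd (t+1) := by rw [Nat.odd_add_one]; tauto
      rw [hvj1, hvj, if_neg hc, if_pos hc2]
      refine ⟨?_, rfl, by simp; omega⟩
      simp only [Prod.mk.injEq, true_and, and_true]
      omega

private lemma main_inv {n : ℕ} (hn : 1 ≤ n) (η : OmegaData) (hη : η.IsOmega n) :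
    ∀ j, 1 ≤ j → j ≤ n →
    ∃ a, 1 ≤ a ∧ a ≤ j ∧
      ((vvec η j = (0, a) ∧
        {w : ℕ × ℕ | ∃ i, 1 ≤ i ∧ i ≤ j ∧ w = vvec η i} =
          ({w : ℕ × ℕ | ∃ t, 1 ≤ t ∧ t ≤ a ∧ w = (0, t)} ∪
           {w : ℕ × ℕ | ∃ s, 1 ≤ s ∧ s ≤ j - a ∧ w = (s, 0)})) ∨
       (vvec η j = (a, 0) ∧
        {w : ℕ × ℕ | ∃ i, 1 ≤ i ∧ i ≤ j ∧ w = vvec η i} =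
          ({w : ℕ × ℕ | ∃ t, 1 ≤ t ∧ t ≤ j - a ∧ w = (0, t)} ∪
           {w : ℕ × ℕ | ∃ s, 1 ≤ s ∧ s ≤ a ∧ w = (s, 0)}))) := by
  intro j
  induction j with
  | zero => intro h; omega
  | succ j ih =>
    intro _ hjn
    by_cases hj0 : j = 0
    · subst hj0
      refine ⟨1, le_rfl, le_rfl, ?_⟩
      have hset : {w : ℕ × ℕ | ∃ i, 1 ≤ i ∧ i ≤ 1 ∧ w = vvec η i} = {vvec η 1} := by
        ext w
        simp only [Set.mem_setOf_eq, Set.mem_singleton_iff]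
        constructor
        · rintro ⟨i, h1, h2, rfl⟩
          have : i = 1 := by omega
          rw [this]
        · rintro rfl; exact ⟨1, le_rfl, le_rfl, rfl⟩
      rcases vvec_one η hη hn with hv | hv
      · right
        refine ⟨hv, ?_⟩
        rw [hset, hv]
        ext w
        simp only [Set.mem_singleton_iff, Set.mem_union, Set.mem_setOf_eq]
        constructor
        · rintro rfl; exact Or.inr ⟨1, le_rfl, le_rfl, rfl⟩
        · rintro (⟨t, h1, h2, rfl⟩ | ⟨s, h1, h2, rfl⟩) <;> simp_all <;> omega
      · left
        refine ⟨hv, ?_⟩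
        rw [hset, hv]
        ext w
        simp only [Set.mem_singleton_iff, Set.mem_union, Set.mem_setOf_eq]
        constructor
        · rintro rfl; exact Or.inl ⟨1, le_rfl, le_rfl, rfl⟩
        · rintro (⟨t, h1, h2, rfl⟩ | ⟨s, h1, h2, rfl⟩) <;> simp_all <;> omega
    · have hj1 : 1 ≤ j := by omega
      obtain ⟨a, ha1, haj, hcase⟩ := ih hj1 (by omega)
      have hVsucc : {w : ℕ × ℕ | ∃ i, 1 ≤ i ∧ i ≤ j + 1 ∧ w = vvec η i} =
          {w : ℕ × ℕ | ∃ i, 1 ≤ i ∧ i ≤ j ∧ w = vvec η i} ∪ {vvec η (j+1)} := by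
        ext w
        simp only [Set.mem_setOf_eq, Set.mem_union, Set.mem_singleton_iff]
        constructor
        · rintro ⟨i, h1, h2, rfl⟩
          by_cases h : i = j + 1
          · right; rw [h]
          · left; exact ⟨i, h1, by omega, rfl⟩
        · rintro (⟨i, h1, h2, rfl⟩ | rfl)
          · exact ⟨i, h1, by omega, rfl⟩
          · exact ⟨j + 1, by omega, le_rfl, rfl⟩
      have hstep := vvec_succ η hη hj1 hjn
      rcases hcase with ⟨hv, hV⟩ | ⟨hv, hV⟩
      · -- vvec η j = (0, a)
        rw [hv] at hstep
        simp only [Prod.fst, Prod.snd] at hstep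
        rcases hstep with ⟨_, h2⟩ | ⟨hnew, _⟩ | ⟨_, h2, _⟩ | ⟨hnew, _, haj'⟩
        · omega
        · -- stays on y-axis: vvec η (j+1) = (0, a+1)
          refine ⟨a + 1, by omega, by omega, Or.inl ⟨hnew, ?_⟩⟩
          rw [hVsucc, hV, hnew]
          ext w
          simp only [Set.mem_union, Set.mem_setOf_eq, Set.mem_singleton_iff]
          constructor
          · rintro ((⟨t, h1, h2, rfl⟩ | ⟨s, h1, h2, rfl⟩) | rfl)
            · exact Or.inl ⟨t, h1, by omega, rfl⟩
            · exact Or.inr ⟨s, h1, by omega, rfl⟩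
            · exact Or.inl ⟨a + 1, by omega, le_rfl, rfl⟩
          · rintro (⟨t, h1, h2, rfl⟩ | ⟨s, h1, h2, rfl⟩)
            · by_cases h : t = a + 1
              · right; rw [h]
              · exact Or.inl (Or.inl ⟨t, h1, by omega, rfl⟩)
            · exact Or.inl (Or.inr ⟨s, h1, by omega, rfl⟩)
        · omega
        · -- flips to x-axis: vvec η (j+1) = (j - a + 1, 0)
          refine ⟨j - a + 1, by omega, by omega, Or.inr ⟨hnew, ?_⟩⟩
          have hja : j + 1 - (j - a + 1) = a := by omega
          rw [hVsucc, hV, hnew, hja]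
          ext w
          simp only [Set.mem_union, Set.mem_setOf_eq, Set.mem_singleton_iff]
          constructor
          · rintro ((⟨t, h1, h2, rfl⟩ | ⟨s, h1, h2, rfl⟩) | rfl)
            · exact Or.inl ⟨t, h1, by omega, rfl⟩
            · exact Or.inr ⟨s, h1, by omega, rfl⟩
            · exact Or.inr ⟨j - a + 1, by omega, le_rfl, rfl⟩
          · rintro (⟨t, h1, h2, rfl⟩ | ⟨s, h1, h2, rfl⟩)
            · exact Or.inl (Or.inl ⟨t, h1, by omega, rfl⟩)
            · by_cases h : s = j - a + 1
              · right; rw [h]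
              · exact Or.inl (Or.inr ⟨s, h1, by omega, rfl⟩)
      · -- vvec η j = (a, 0)
        rw [hv] at hstep
        simp only [Prod.fst, Prod.snd] at hstep
        rcases hstep with ⟨hnew, _⟩ | ⟨_, h2⟩ | ⟨hnew, _, haj'⟩ | ⟨_, _, h2⟩
        · -- stays on x-axis: vvec η (j+1) = (a+1, 0)
          refine ⟨a + 1, by omega, by omega, Or.inr ⟨hnew, ?_⟩⟩
          rw [hVsucc, hV, hnew]
          have hja : j + 1 - (a + 1) = j - a := by omega
          rw [hja]
          ext w
          simp only [Set.mem_union, Set.mem_setOf_eq, Set.mem_singleton_iff]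
          constructor
          · rintro ((⟨t, h1, h2, rfl⟩ | ⟨s, h1, h2, rfl⟩) | rfl)
            · exact Or.inl ⟨t, h1, by omega, rfl⟩
            · exact Or.inr ⟨s, h1, by omega, rfl⟩
            · exact Or.inr ⟨a + 1, by omega, le_rfl, rfl⟩
          · rintro (⟨t, h1, h2, rfl⟩ | ⟨s, h1, h2, rfl⟩)
            · exact Or.inl (Or.inl ⟨t, h1, by omega, rfl⟩)
            · by_cases h : s = a + 1
              · right; rw [h]
              · exact Or.inl (Or.inr ⟨s, h1, by omega, rfl⟩)
        · omega
        · -- flips to y-axis: vvec η (j+1) = (0, j - a + 1)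
          refine ⟨j - a + 1, by omega, by omega, Or.inl ⟨hnew, ?_⟩⟩
          have hja : j + 1 - (j - a + 1) = a := by omega
          rw [hVsucc, hV, hnew, hja]
          ext w
          simp only [Set.mem_union, Set.mem_setOf_eq, Set.mem_singleton_iff]
          constructor
          · rintro ((⟨t, h1, h2, rfl⟩ | ⟨s, h1, h2, rfl⟩) | rfl)
            · exact Or.inl ⟨t, h1, by omega, rfl⟩
            · exact Or.inr ⟨s, h1, by omega, rfl⟩
            · exact Or.inl ⟨j - a + 1, by omega, le_rfl, rfl⟩
          · rintro (⟨t, h1, h2, rfl⟩ | ⟨s, h1, h2, rfl⟩)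
            · by_cases h : t = j - a + 1
              · right; rw [h]
              · exact Or.inl (Or.inl ⟨t, h1, by omega, rfl⟩)
            · exact Or.inl (Or.inr ⟨s, h1, by omega, rfl⟩)
        · omega

end Helpers

theorem stmt9 (n : ℕ) (hn : 1 ≤ n) (η : OmegaData) (hη : η.IsOmega n)
    (j : ℕ) (hj1 : 1 ≤ j) (hjn : j ≤ n) :
    (∀ l : ℕ, vvec η j = (0, l) →
      {w | ∃ i, 1 ≤ i ∧ i ≤ j ∧ w = vvec η i} =
        ({w | ∃ t, 1 ≤ t ∧ t ≤ l ∧ w = ((0 : ℕ), t)} ∪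
         {w | ∃ s, 1 ≤ s ∧ s ≤ j - l ∧ w = (s, (0 : ℕ))})) ∧
    (∀ l : ℕ, vvec η j = (l, 0) →
      {w | ∃ i, 1 ≤ i ∧ i ≤ j ∧ w = vvec η i} =
        ({w | ∃ t, 1 ≤ t ∧ t ≤ j - l ∧ w = ((0 : ℕ), t)} ∪
         {w | ∃ s, 1 ≤ s ∧ s ≤ l ∧ w = (s, (0 : ℕ))})) := by
  obtain ⟨a, ha1, haj, hcase⟩ := main_inv hn η hη j hj1 hjn
  constructor
  · intro l hl
    rcases hcase with ⟨hv, hV⟩ | ⟨hv, hV⟩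
    · rw [hl] at hv
      have : l = a := by
        have := hv.symm
        simp only [Prod.mk.injEq] at this
        exact this.2.symm
      rw [this]
      exact hV
    · rw [hl] at hv
      simp only [Prod.mk.injEq] at hv
      omega
  · intro l hl
    rcases hcase with ⟨hv, hV⟩ | ⟨hv, hV⟩
    · rw [hl] at hv
      simp only [Prod.mk.injEq] at hv
      omega
    · rw [hl] at hv
      have : l = a := by
        simp only [Prod.mk.injEq] at hv
        exact hv.1.symm.symm
      rw [this]
      exact hV
end

section
/- Let η = (z, d₀, d₁, …, d_r) ∈ Ω and 1 ≤ l < j ≤ n. (i) If v_{l,η} = (p_l, 0) and v_{j,η} = (p_j, 0), then π₁(v_{j,η} + (n−j)·(1,1)) ≤ π₁(v_{l,η} + (n−l)·(1,1)), with equality if and only if there exists 1 ≤ t ≤ r with Σ_{i=0}^{t−1} d_i < l < j ≤ Σ_{i=0}^{t} d_i. (ii) If v_{l,η} = (0, p_l) and v_{j,η} = (0, p_j), then π₂(v_{j,η} + (n−j)·(1,1)) ≤ π₂(v_{l,η} + (n−l)·(1,1)), with equality if and only if there exists 1 ≤ t ≤ r with Σ_{i=0}^{t−1} d_i < l < j ≤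 Σ_{i=0}^{t} d_i. -/
open Finset

/-!
If `j` lies in block `t` (that is, `d₀ + ⋯ + d_{t-1} < j ≤ d₀ + ⋯ + d_t`), the nonzero
coordinate of `v_{j,η}` is `j - B_t`, where `B_t` is the sum of the `d_i`, `i < t`, of parity
opposite to `t`. So that coordinate plus `n - j` is `n - B_t`, which depends only on the block.
Two vectors lie on the same axis exactly when their blocks have the same parity, and
`B_{t+2} = B_t + d_{t+1}` with `d_{t+1} ≥ 1`, so `n - B_t` strictly decreases from one block to
any later block of the same parity.
-/

namespace OmegaData

variable {n : ℕ} {η : OmegaData}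

noncomputable def vcoord (η : OmegaData) (j : ℕ) : ℕ :=
  (∑ i ∈ range (tIdx η j), if (Odd i ↔ Odd (tIdx η j)) then η.d i else 0)
    + (j - ∑ i ∈ range (tIdx η j), η.d i)

def oppSum (η : OmegaData) (t : ℕ) : ℕ :=
  ∑ i ∈ range t, if (Odd i ↔ Odd t) then 0 else η.d i

lemma vvec_eq_vcoord (j : ℕ) :
    vvec η j = if (η.z = true) ↔ Odd (tIdx η j) then (η.vcoord j, 0) else (0, η.vcoord j) :=
  rfl

lemma tIdx_le_of_le_sum {j t : ℕ} (h : j ≤ ∑ i ∈ range (t + 1), η.d i) : tIdx η j ≤ t :=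
  Nat.sInf_le h

lemma tIdx_eq {j t : ℕ} (hlo : ∑ i ∈ range t, η.d i < j)
    (hhi : j ≤ ∑ i ∈ range (t + 1), η.d i) : tIdx η j = t := by
  refine le_antisymm (tIdx_le_of_le_sum hhi) (le_csInf ⟨t, hhi⟩ fun s hs => ?_)
  by_contra! hst
  have : ∑ i ∈ range (s + 1), η.d i ≤ ∑ i ∈ range t, η.d i :=
    sum_le_sum_of_subset (range_subset_range.2 hst)
  exact absurd (le_trans hs this) (not_le.2 hlo)

lemma tIdx_spec (hη : η.IsOmega n) {j : ℕ} (hj1 : 1 ≤ j) (hjn : j ≤ n) :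
    1 ≤ tIdx η j ∧ tIdx η j ≤ η.r ∧ ∑ i ∈ range (tIdx η j), η.d i < j ∧
      j ≤ ∑ i ∈ range (tIdx η j + 1), η.d i := by
  obtain ⟨hd0, -, -, hsum⟩ := hη
  have hr : j ≤ ∑ i ∈ range (η.r + 1), η.d i := hsum ▸ hjn
  have hhi : j ≤ ∑ i ∈ range (tIdx η j + 1), η.d i :=
    Nat.sInf_mem (s := {t | j ≤ ∑ i ∈ range (t + 1), η.d i}) ⟨η.r, hr⟩
  have hpos : 1 ≤ tIdx η j := by
    by_contra! h0
    simp [Nat.lt_one_iff.1 h0, hd0] at hhi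
    omega
  obtain ⟨s, hs⟩ : ∃ s, tIdx η j = s + 1 := ⟨tIdx η j - 1, by omega⟩
  have hlo : s ∉ {t | j ≤ ∑ i ∈ range (t + 1), η.d i} :=
    Nat.notMem_of_lt_sInf (show s < tIdx η j by omega)
  exact ⟨hpos, tIdx_le_of_le_sum hr, hs ▸ not_le.1 hlo, hhi⟩

lemma tIdx_eq_tIdx_iff (hη : η.IsOmega n) {l j : ℕ} (hl1 : 1 ≤ l) (hlj : l < j)
    (hjn : j ≤ n) :
    tIdx η l = tIdx η j ↔ ∃ t, 1 ≤ t ∧ t ≤ η.r ∧ ∑ i ∈ range t, η.d i < l ∧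
      j ≤ ∑ i ∈ range (t + 1), η.d i := by
  obtain ⟨hl, hlr, hllo, -⟩ := tIdx_spec hη hl1 (by omega)
  obtain ⟨-, -, hjlo, hjhi⟩ := tIdx_spec hη (by omega) hjn
  constructor
  · intro h
    exact ⟨tIdx η l, hl, hlr, hllo, h ▸ hjhi⟩
  · rintro ⟨t, -, -, hlo, hhi⟩
    rw [tIdx_eq hlo (by omega), tIdx_eq (by omega) hhi]

lemma sum_range_ite_add_oppSum (t : ℕ) :
    (∑ i ∈ range t, if (Odd i ↔ Odd t) then η.d i else 0) + η.oppSum t =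
      ∑ i ∈ range t, η.d i := by
  rw [oppSum, ← sum_add_distrib]
  exact sum_congr rfl fun i _ => by split_ifs <;> simp

lemma vcoord_add_sub_add_oppSum (hη : η.IsOmega n) {j : ℕ} (hj1 : 1 ≤ j) (hjn : j ≤ n) :
    η.vcoord j + (n - j) + η.oppSum (tIdx η j) = n := by
  have hsplit := sum_range_ite_add_oppSum (η := η) (tIdx η j)
  have hlo := (tIdx_spec hη hj1 hjn).2.2.1
  rw [vcoord]
  omega

lemma one_le_vcoord (hη : η.IsOmega n) {j : ℕ} (hj1 : 1 ≤ j) (hjn : j ≤ n) :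
    1 ≤ η.vcoord j := by
  have hlo := (tIdx_spec hη hj1 hjn).2.2.1
  rw [vcoord]
  omega

lemma oppSum_add_two (t : ℕ) : η.oppSum (t + 2) = η.oppSum t + η.d (t + 1) := by
  have hodd : Odd (t + 2) ↔ Odd t := by
    rw [show t + 2 = t + 1 + 1 from rfl, Nat.odd_add_one, Nat.odd_add_one, not_not]
  have hodd' : ¬(Odd (t + 1) ↔ Odd t) := by
    rw [Nat.odd_add_one]; tauto
  simp only [oppSum, sum_range_succ, hodd, iff_self, if_true, if_neg hodd', add_zero]

lemma oppSum_le_oppSum_add_two_mul (s k : ℕ) : η.oppSum s ≤ η.oppSum (s + 2 * k) := by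
  induction k with
  | zero => rfl
  | succ k ih =>
    rw [show s + 2 * (k + 1) = s + 2 * k + 2 by ring, oppSum_add_two]
    omega

lemma oppSum_lt_oppSum (hd : ∀ i, 1 ≤ i → i ≤ η.r → 1 ≤ η.d i) {s t : ℕ}
    (hpar : Odd s ↔ Odd t) (hst : s < t) (ht : t ≤ η.r) : η.oppSum s < η.oppSum t := by
  rw [Nat.odd_iff, Nat.odd_iff] at hpar
  obtain ⟨k, rfl⟩ : ∃ k, t = s + 2 + 2 * k := ⟨(t - s - 2) / 2, by omega⟩
  have hstep := oppSum_add_two (η := η) s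
  have hmono := oppSum_le_oppSum_add_two_mul (η := η) (s + 2) k
  have hd1 := hd (s + 1) (by omega) (by omega)
  omega

lemma vcoord_add_sub_le (hη : η.IsOmega n) {l j : ℕ} (hl1 : 1 ≤ l) (hlj : l < j)
    (hjn : j ≤ n) (hpar : Odd (tIdx η l) ↔ Odd (tIdx η j)) :
    η.vcoord j + (n - j) ≤ η.vcoord l + (n - l) ∧
      (η.vcoord j + (n - j) = η.vcoord l + (n - l) ↔
        ∃ t, 1 ≤ t ∧ t ≤ η.r ∧ ∑ i ∈ range t, η.d i < l ∧
          j ≤ ∑ i ∈ range (t + 1), η.d i) := by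
  have hl := vcoord_add_sub_add_oppSum hη hl1 (by omega)
  have hj := vcoord_add_sub_add_oppSum hη (by omega) hjn
  obtain ⟨-, hjr, -, hjhi⟩ := tIdx_spec hη (by omega) hjn
  have hmono : tIdx η l ≤ tIdx η j := tIdx_le_of_le_sum (hlj.le.trans hjhi)
  rw [← tIdx_eq_tIdx_iff hη hl1 hlj hjn]
  rcases hmono.eq_or_lt with heq | hlt
  · rw [heq] at hl
    exact ⟨by omega, iff_of_true (by omega) heq⟩
  · have hopp := oppSum_lt_oppSum hη.2.1 hpar hlt hjr
    exact ⟨by omega, iff_of_false (by omega) hlt.ne⟩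

lemma vvec_eq_mk_zero_iff (hη : η.IsOmega n) {j : ℕ} (hj1 : 1 ≤ j) (hjn : j ≤ n) {p : ℕ} :
    vvec η j = (p, 0) ↔ ((η.z = true) ↔ Odd (tIdx η j)) ∧ η.vcoord j = p := by
  have := one_le_vcoord hη hj1 hjn
  rw [vvec_eq_vcoord]
  split_ifs with h <;> simp only [Prod.mk.injEq, h, true_and, and_true, false_and, iff_false,
    not_and]
  omega

lemma vvec_eq_zero_mk_iff (hη : η.IsOmega n) {j : ℕ} (hj1 : 1 ≤ j) (hjn : j ≤ n) {p : ℕ} :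
    vvec η j = (0, p) ↔ ¬((η.z = true) ↔ Odd (tIdx η j)) ∧ η.vcoord j = p := by
  have := one_le_vcoord hη hj1 hjn
  rw [vvec_eq_vcoord]
  split_ifs with h <;> simp only [Prod.mk.injEq, h, true_and, false_and, iff_false, not_and,
    not_true_eq_false, not_false_eq_true]
  omega

end OmegaData

theorem stmt11_general (n : ℕ) (η : OmegaData) (hη : η.IsOmega n)
    (l j : ℕ) (hl1 : 1 ≤ l) (hlj : l < j) (hjn : j ≤ n) :
    (∀ pl pj : ℕ, vvec η l = (pl, 0) → vvec η j = (pj, 0) →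
      (pj + (n - j) ≤ pl + (n - l) ∧
        (pj + (n - j) = pl + (n - l) ↔
          ∃ t, 1 ≤ t ∧ t ≤ η.r ∧ (∑ i ∈ range t, η.d i) < l ∧
            j ≤ ∑ i ∈ range (t+1), η.d i))) ∧
    (∀ pl pj : ℕ, vvec η l = (0, pl) → vvec η j = (0, pj) →
      (pj + (n - j) ≤ pl + (n - l) ∧
        (pj + (n - j) = pl + (n - l) ↔
          ∃ t, 1 ≤ t ∧ t ≤ η.r ∧ (∑ i ∈ range t, η.d i) < l ∧
            j ≤ ∑ i ∈ range (t+1), η.d i))) := by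
  have hl : l ≤ n := hlj.le.trans hjn
  have hj : 1 ≤ j := hl1.trans hlj.le
  constructor
  · intro pl pj hvl hvj
    obtain ⟨hzl, rfl⟩ := (OmegaData.vvec_eq_mk_zero_iff hη hl1 hl).1 hvl
    obtain ⟨hzj, rfl⟩ := (OmegaData.vvec_eq_mk_zero_iff hη hj hjn).1 hvj
    exact OmegaData.vcoord_add_sub_le hη hl1 hlj hjn (hzl.symm.trans hzj)
  · intro pl pj hvl hvj
    obtain ⟨hzl, rfl⟩ := (OmegaData.vvec_eq_zero_mk_iff hη hl1 hl).1 hvl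
    obtain ⟨hzj, rfl⟩ := (OmegaData.vvec_eq_zero_mk_iff hη hj hjn).1 hvj
    exact OmegaData.vcoord_add_sub_le hη hl1 hlj hjn (by tauto)

theorem stmt11 (n : ℕ) (hn : 1 ≤ n) (η : OmegaData) (hη : η.IsOmega n)
    (l j : ℕ) (hl1 : 1 ≤ l) (hlj : l < j) (hjn : j ≤ n) :
    (∀ pl pj : ℕ, vvec η l = (pl, 0) → vvec η j = (pj, 0) →
      (pj + (n - j) ≤ pl + (n - l) ∧
        (pj + (n - j) = pl + (n - l) ↔
          ∃ t, 1 ≤ t ∧ t ≤ η.r ∧ (∑ i ∈ range t, η.d i) < l ∧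
            j ≤ ∑ i ∈ range (t+1), η.d i))) ∧
    (∀ pl pj : ℕ, vvec η l = (0, pl) → vvec η j = (0, pj) →
      (pj + (n - j) ≤ pl + (n - l) ∧
        (pj + (n - j) = pl + (n - l) ↔
          ∃ t, 1 ≤ t ∧ t ≤ η.r ∧ (∑ i ∈ range t, η.d i) < l ∧
            j ≤ ∑ i ∈ range (t+1), η.d i))) :=
  stmt11_general n η hη l j hl1 hlj hjn
end
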